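/- arXiv:1511.03357 — 7 statements merged into one kernel-verified Lean document; each statement's English description precedes it below -/
import Mathlib

section
/- For all x ≥ 1 and y ≥ 2, Φ(x, y) − Φ₀(x, y) = O(x / (y log y)), where the implied constant is absolute. -/
open Finset Classical in
/-- The number of positive integers `n ≤ x` all of whose prime factors exceed `y`. -/
noncomputable def Phi (x y : ℝ) : ℕ :=
  ((Finset.Icc 1 ⌊x⌋₊).filter (fun n => ∀ p : ℕ, p.Prime → p ∣ n → y < p)).card

open Finset Classical in
/-- The number of squarefree positive integers `n ≤ x` all of whose prime factors exceed `y`. -/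
noncomputable def Phi0 (x y : ℝ) : ℕ :=
  ((Finset.Icc 1 ⌊x⌋₊).filter
    (fun n => Squarefree n ∧ ∀ p : ℕ, p.Prime → p ∣ n → y < p)).card

open Finset Real Chebyshev

/-! A non-squarefree `n ≤ x` all of whose prime factors exceed `y` is a multiple of `p²` for some
prime `y < p ≤ x`, so `Φ(x, y) - Φ₀(x, y) ≤ x ∑_{p > y} p⁻²`. Partial summation against Chebyshev's
bound `θ(t) ≤ t log 4` gives `∑_{p > M} log p / p² ≤ 5 log 4 / (M + 1)`, and `log p > log y` for
each of these primes. -/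

theorem sum_range_succ_ite_prime_log (n : ℕ) :
    ∑ i ∈ range (n + 1), (if i.Prime then log i else 0) = θ n := by
  rw [theta_eq_sum_Icc, Nat.floor_natCast, sum_filter, Nat.range_succ_eq_Icc_zero]

theorem sum_prime_log_mul_le_of_antitoneOn {f : ℕ → ℝ} {M N : ℕ}
    (hf : AntitoneOn f (Set.Ioi M)) (hf0 : ∀ i, 0 ≤ f i) (hMN : M < N) :
    ∑ p ∈ Ioc M N with p.Prime, log p * f p ≤
      log 4 * (N * f N + ∑ i ∈ Ioc M (N - 1), i * (f i - f (i + 1))) := by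
  have hparts := sum_Ioc_by_parts f (fun i => if i.Prime then log i else 0) hMN
  simp only [smul_eq_mul, sum_range_succ_ite_prime_log] at hparts
  have hθM : 0 ≤ f (M + 1) * θ M := mul_nonneg (hf0 (M + 1)) (theta_nonneg M)
  have hθN : f N * θ N ≤ log 4 * (N * f N) := by
    nlinarith [theta_le_log4_mul_x (Nat.cast_nonneg (α := ℝ) N), hf0 N]
  have hθi : ∀ i ∈ Ioc M (N - 1),
      -((f (i + 1) - f i) * θ i) ≤ log 4 * (i * (f i - f (i + 1))) := by
    intro i hi
    have hMi : M < i := (mem_Ioc.1 hi).1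
    have hfi : f (i + 1) ≤ f i := hf hMi (by omega : M < i + 1) (by omega)
    nlinarith [theta_le_log4_mul_x (Nat.cast_nonneg (α := ℝ) i)]
  calc ∑ p ∈ Ioc M N with p.Prime, log p * f p
      = ∑ i ∈ Ioc M N, f i * (if i.Prime then log i else 0) := by
        rw [sum_filter]; exact sum_congr rfl fun i _ => by split_ifs <;> ring
    _ ≤ _ := by
        rw [hparts, mul_add, mul_sum, sub_eq_add_neg _ (∑ i ∈ _, _), ← sum_neg_distrib]
        have := sum_le_sum hθi
        linarith

theorem natCast_mul_sub_inv_sq_succ_le {i : ℕ} (hi : 0 < i) :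
    (i : ℝ) * (((i : ℝ) ^ 2)⁻¹ - (((i + 1 : ℕ) : ℝ) ^ 2)⁻¹) ≤ 2 * ((i : ℝ) ^ 2)⁻¹ := by
  have : (0 : ℝ) < i := by positivity
  push_cast
  field_simp
  nlinarith

theorem sum_prime_log_div_sq_le (M N : ℕ) :
    ∑ p ∈ Ioc M N with p.Prime, log p * ((p : ℝ) ^ 2)⁻¹ ≤ 5 * log 4 / (M + 1) := by
  rcases le_or_gt N M with hNM | hMN
  · rw [Ioc_eq_empty_of_le hNM, filter_empty, sum_empty]
    positivity
  have hanti : AntitoneOn (fun i : ℕ => ((i : ℝ) ^ 2)⁻¹) (Set.Ioi M) := fun i hi j _ hij => by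
    have : (0 : ℝ) < i := Nat.cast_pos.2 (Nat.zero_lt_of_lt hi)
    dsimp only
    gcongr
  have hlast : (N : ℝ) * ((N : ℝ) ^ 2)⁻¹ ≤ 1 / (M + 1) := by
    have hN : (0 : ℝ) < N := by exact_mod_cast Nat.zero_lt_of_lt hMN
    have : (M : ℝ) + 1 ≤ N := by exact_mod_cast hMN
    rw [sq, mul_inv, ← mul_assoc, mul_inv_cancel₀ hN.ne', one_mul, one_div]
    gcongr
  have hmid : ∑ i ∈ Ioc M (N - 1), (i : ℝ) * (((i : ℝ) ^ 2)⁻¹ - (((i + 1 : ℕ) : ℝ) ^ 2)⁻¹)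
      ≤ 2 * (2 / (M + 1)) := by
    have hIoo : Ioc M (N - 1) = Ioo M N := by ext; simp only [mem_Ioc, mem_Ioo]; omega
    calc _ ≤ ∑ i ∈ Ioo M N, 2 * ((i : ℝ) ^ 2)⁻¹ := by
          rw [hIoo]
          exact sum_le_sum fun i hi =>
            natCast_mul_sub_inv_sq_succ_le (Nat.zero_lt_of_lt (mem_Ioo.1 hi).1)
      _ ≤ 2 * (2 / (M + 1)) := by
          rw [← mul_sum]
          gcongr
          exact sum_Ioo_inv_sq_le M N
  grw [sum_prime_log_mul_le_of_antitoneOn hanti (fun i => by positivity) hMN, hlast, hmid]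
  exact le_of_eq (by ring)

theorem sum_prime_inv_sq_le {y : ℝ} (hy : 1 < y) (N : ℕ) :
    ∑ p ∈ Ioc ⌊y⌋₊ N with p.Prime, ((p : ℝ) ^ 2)⁻¹ ≤ 5 * log 4 / (y * log y) := by
  have hlogy : 0 < log y := log_pos hy
  have hyM : y < ⌊y⌋₊ + 1 := Nat.lt_floor_add_one y
  calc ∑ p ∈ Ioc ⌊y⌋₊ N with p.Prime, ((p : ℝ) ^ 2)⁻¹
      ≤ ∑ p ∈ Ioc ⌊y⌋₊ N with p.Prime, log p * ((p : ℝ) ^ 2)⁻¹ / log y := by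
        refine sum_le_sum fun p hp => ?_
        have hyp : y < p := (Nat.floor_lt (by linarith)).1 (mem_Ioc.1 (mem_filter.1 hp).1).1
        rw [le_div_iff₀ hlogy, mul_comm]
        gcongr
    _ ≤ 5 * log 4 / (⌊y⌋₊ + 1) / log y := by
        rw [← sum_div]
        gcongr
        exact sum_prime_log_div_sq_le _ N
    _ ≤ 5 * log 4 / (y * log y) := by
        rw [div_div]
        gcongr

theorem Phi0_le_Phi (x y : ℝ) : Phi0 x y ≤ Phi x y := by
  classical
  exact card_le_card <| monotone_filter_right _ fun _ _ h => h.2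

theorem Phi_sub_Phi0_le (x y : ℝ) :
    Phi x y - Phi0 x y ≤ ∑ p ∈ Ioc ⌊y⌋₊ ⌊x⌋₊ with p.Prime, ⌊x⌋₊ / (p * p) := by
  classical
  rw [Phi, Phi0, ← card_sdiff_of_subset (monotone_filter_right _ fun _ _ h => h.2)]
  calc _ ≤ #({p ∈ Ioc ⌊y⌋₊ ⌊x⌋₊ | p.Prime}.biUnion fun p => {m ∈ Ioc 0 ⌊x⌋₊ | p * p ∣ m}) := by
        refine card_le_card fun n hn => ?_
        simp only [mem_sdiff, mem_filter, mem_Icc, not_and] at hn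
        obtain ⟨⟨⟨hn1, hnx⟩, hy⟩, hsf⟩ := hn
        obtain ⟨p, hp, hpp⟩ : ∃ p, p.Prime ∧ p * p ∣ n := by
          simpa [Nat.squarefree_iff_prime_squarefree] using mt (hsf ⟨hn1, hnx⟩) (not_not.2 hy)
        have hpx : p ≤ ⌊x⌋₊ := (Nat.le_mul_self p).trans ((Nat.le_of_dvd hn1 hpp).trans hnx)
        have hyp : ⌊y⌋₊ < p :=
          (Nat.floor_lt' hp.ne_zero).2 (hy p hp ((dvd_mul_right p p).trans hpp))
        simp only [mem_biUnion, mem_filter, mem_Ioc]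
        exact ⟨p, ⟨⟨hyp, hpx⟩, hp⟩, ⟨hn1, hnx⟩, hpp⟩
    _ ≤ _ := card_biUnion_le.trans (sum_le_sum fun p _ => (Nat.Ioc_filter_dvd_card_eq_div _ _).le)

theorem phi_sub_phi0_bound :
    ∃ C : ℝ, 0 < C ∧ ∀ x y : ℝ, 1 ≤ x → 2 ≤ y →
      |(Phi x y : ℝ) - (Phi0 x y : ℝ)| ≤ C * x / (y * Real.log y) := by
  refine ⟨5 * log 4, by positivity, fun x y hx hy => ?_⟩
  have hle := Phi0_le_Phi x y
  rw [abs_of_nonneg (sub_nonneg.2 (by exact_mod_cast hle)), ← Nat.cast_sub hle]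
  calc ((Phi x y - Phi0 x y : ℕ) : ℝ)
      ≤ ∑ p ∈ Ioc ⌊y⌋₊ ⌊x⌋₊ with p.Prime, ((⌊x⌋₊ / (p * p) : ℕ) : ℝ) := by
        exact_mod_cast Phi_sub_Phi0_le x y
    _ ≤ ∑ p ∈ Ioc ⌊y⌋₊ ⌊x⌋₊ with p.Prime, x * ((p : ℝ) ^ 2)⁻¹ := by
        refine sum_le_sum fun p _ => Nat.cast_div_le.trans ?_
        rw [← div_eq_mul_inv, sq]
        push_cast
        gcongr
        exact Nat.floor_le (by linarith)
    _ ≤ x * (5 * log 4 / (y * log y)) := by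
        rw [← mul_sum]
        gcongr
        exact sum_prime_inv_sq_le (by linarith) _
    _ = 5 * log 4 * x / (y * log y) := by ring
end

section
/- For any positive integer n and prime p not dividing n, if the set of subset sums of {φ(d) : d | n} equals {0, 1, ..., n} (i.e., n is φ-practical) and p ≤ n + 2, then pn is φ-practical. -/
/-!
The divisors of `p * n` are the `d` and the `p * d` with `d ∣ n`, and `φ (p * d) = (p - 1) * φ d`,
so the subset sums for `p * n` contain every `(p - 1) * a + b` with `a`, `b` subset sums for `n`.
When `p - 1 ≤ n + 1`, writing `k ≤ p * n` as such a combination with `a, b ≤ n` is division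
with remainder by `p - 1` (or `a = n` when the quotient is too large).
-/

open Pointwise

/-- The set of all subset sums of `{φ(d) : d ∣ n}`. -/
def SubsetSums (n : ℕ) : Set ℕ :=
  {k | ∃ D : Finset ℕ, D ⊆ n.divisors ∧ k = ∑ d ∈ D, Nat.totient d}

/-- `n` is `φ`-practical if every integer in `{0, 1, ..., n}` is a subset sum of
the totients of the divisors of `n`. -/
def PhiPractical (n : ℕ) : Prop := 0 < n ∧ SubsetSums n = Set.Iic n

open Finset

theorem subsetSums_subset_Iic (n : ℕ) : SubsetSums n ⊆ Set.Iic n := by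
  rintro _ ⟨D, hD, rfl⟩
  calc ∑ d ∈ D, d.totient ≤ ∑ d ∈ n.divisors, d.totient := sum_le_sum_of_subset hD
    _ = n := Nat.sum_totient n

theorem mul_add_mem_subsetSums_prime_mul {n p a b : ℕ} (hp : p.Prime) (hpn : ¬p ∣ n)
    (ha : a ∈ SubsetSums n) (hb : b ∈ SubsetSums n) : (p - 1) * a + b ∈ SubsetSums (p * n) := by
  obtain ⟨A, hA, rfl⟩ := ha
  obtain ⟨B, hB, rfl⟩ := hb
  have hpn0 : p * n ≠ 0 := mul_ne_zero hp.ne_zero (by rintro rfl; exact hpn (dvd_zero p))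
  have not_dvd : ∀ d ∈ n.divisors, ¬p ∣ d := fun d hd h =>
    hpn (h.trans (Nat.dvd_of_mem_divisors hd))
  have hdisj : Disjoint (A.image (p * ·)) B := by
    simp only [disjoint_left, mem_image]
    rintro _ ⟨d, -, rfl⟩ hB'
    exact not_dvd _ (hB hB') (dvd_mul_right p d)
  refine ⟨A.image (p * ·) ∪ B, union_subset ?_ ?_, ?_⟩
  · exact image_subset_iff.2 fun d hd =>
      Nat.mem_divisors.2 ⟨mul_dvd_mul_left p (Nat.dvd_of_mem_divisors (hA hd)), hpn0⟩
  · exact hB.trans (Nat.divisors_subset_of_dvd hpn0 (dvd_mul_left n p))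
  · rw [sum_union hdisj, sum_image fun _ _ _ _ h => mul_left_cancel₀ hp.ne_zero h, mul_sum]
    congr 1
    exact sum_congr rfl fun d hd =>
      (Nat.totient_mul_of_prime_of_not_dvd hp (not_dvd d (hA hd))).symm

theorem exists_mul_add_eq_of_le_succ_mul {c n k : ℕ} (hc : c ≤ n + 1) (hk : k ≤ (c + 1) * n) :
    ∃ a ≤ n, ∃ b ≤ n, c * a + b = k := by
  by_cases hcn : c * n ≤ k
  · exact ⟨n, le_rfl, k - c * n, by rw [add_mul, one_mul] at hk; omega, by omega⟩
  · have hc0 : 0 < c := Nat.pos_of_ne_zero (by rintro rfl; simp at hcn)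
    refine ⟨k / c, (Nat.div_lt_of_lt_mul (by omega)).le, k % c, ?_, Nat.div_add_mod k c⟩
    have := Nat.mod_lt k hc0
    omega

theorem phiPractical_mul_prime (n p : ℕ) (hn : PhiPractical n) (hp : p.Prime)
    (hpn : ¬ p ∣ n) (hle : p ≤ n + 2) : PhiPractical (p * n) := by
  refine ⟨Nat.mul_pos hp.pos hn.1, (subsetSums_subset_Iic _).antisymm fun k hk => ?_⟩
  have hk' : k ≤ (p - 1 + 1) * n := by rwa [Nat.sub_add_cancel hp.one_le]
  obtain ⟨a, ha, b, hb, rfl⟩ := exists_mul_add_eq_of_le_succ_mul (by omega) hk'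
  rw [← Set.mem_Iic, ← hn.2] at ha hb
  exact mul_add_mem_subsetSums_prime_mul hp hpn ha hb
end

section
/- If n is φ-practical, p is a prime not dividing n, and pn is φ-practical, then p ≤ n + 2. -/
open Pointwise

/-!
A subset sum of `{φ(d) : d ∣ p * n}` that exceeds `n = ∑_{d ∣ n} φ(d)` must use some divisor `d`
of `p * n` not dividing `n`; such a `d` is a multiple of `p`, so `p - 1 = φ(p) ≤ φ(d)`.
Applied to the subset sum `n + 1`, which exists when `p * n` is `φ`-practical, this gives
`p - 1 ≤ n + 1`.
-/

theorem Nat.Prime.dvd_of_dvd_mul_of_not_dvd {p d n : ℕ} (hp : p.Prime) (hd : d ∣ p * n)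
    (hdn : ¬ d ∣ n) : p ∣ d := by
  by_contra hpd
  exact hdn (((hp.coprime_iff_not_dvd.mpr hpd).symm).dvd_of_dvd_mul_left hd)

theorem Nat.Prime.sub_one_le_totient_of_dvd {p d : ℕ} (hp : p.Prime) (hpd : p ∣ d) (hd : d ≠ 0) :
    p - 1 ≤ d.totient :=
  Nat.totient_prime hp ▸ Nat.le_of_dvd (Nat.totient_pos.mpr (Nat.pos_of_ne_zero hd))
    (Nat.totient_dvd_of_dvd hpd)

theorem exists_not_dvd_totient_le_of_mem_subsetSums {m n k : ℕ} (hn : n ≠ 0)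
    (hk : k ∈ SubsetSums m) (hnk : n < k) : ∃ d ∈ m.divisors, ¬ d ∣ n ∧ d.totient ≤ k := by
  obtain ⟨D, hDm, rfl⟩ := hk
  have hD : ¬ D ⊆ n.divisors := fun hDn => by
    have := Finset.sum_le_sum_of_subset (f := Nat.totient) hDn
    rw [Nat.sum_totient] at this
    omega
  obtain ⟨d, hdD, hdn⟩ := Finset.not_subset.mp hD
  exact ⟨d, hDm hdD, fun h => hdn (Nat.mem_divisors.mpr ⟨h, hn⟩),
    Finset.single_le_sum (fun _ _ => Nat.zero_le _) hdD⟩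

theorem prime_le_of_phiPractical_mul_general (n p : ℕ) (hp : p.Prime)
    (hmul : PhiPractical (p * n)) : p ≤ n + 2 := by
  obtain ⟨hpn0, hsums⟩ := hmul
  have hn0 : n ≠ 0 := by rintro rfl; simp at hpn0
  have hmem : n + 1 ∈ SubsetSums (p * n) := by
    rw [hsums, Set.mem_Iic]
    nlinarith [hp.two_le, Nat.pos_of_ne_zero hn0]
  obtain ⟨d, hd, hdn, hdle⟩ := exists_not_dvd_totient_le_of_mem_subsetSums hn0 hmem n.lt_succ_self
  have hd' := Nat.mem_divisors.mp hd
  have := hp.sub_one_le_totient_of_dvd (hp.dvd_of_dvd_mul_of_not_dvd hd'.1 hdn)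
    (ne_zero_of_dvd_ne_zero hd'.2 hd'.1)
  omega

theorem prime_le_of_phiPractical_mul (n p : ℕ) (hn : PhiPractical n) (hp : p.Prime)
    (hpn : ¬ p ∣ n) (hmul : PhiPractical (p * n)) : p ≤ n + 2 :=
  prime_le_of_phiPractical_mul_general n p hp hmul
end

section
/- A squarefree positive integer n with prime factorization p₁ < p₂ < ... < p_k is φ-practical if and only if p_i ≤ 2 + p₁p₂⋯p_{i−1} for every i = 1, ..., k (with the empty product equal to 1). -/
open Pointwise

/-!
Necessity: if `p > P + 2`, where `P` is the product of the primes of `n` below `p`, then `P + 1`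
is not a subset sum. A divisor with a prime factor `q ≥ p` has totient at least `p - 1 > P + 1`,
and the divisors without one divide `P`, so their totients sum to at most `∑_{d ∣ P} φ(d) = P`.

Sufficiency: by induction on the primes of `n`, adding the largest one `p` last. With
`m = n / p`, the bound `p ≤ m + 2` lets every `k ≤ m p` be written as `s + (p - 1) t` with
`s, t ≤ m`; the divisors for `s` together with `p` times the divisors for `t` realise `k`,
since `φ(p d) = (p - 1) φ(d)`.
-/

open Finset
open scoped Nat

lemma sum_totient_le_of_subset_divisors {D : Finset ℕ} {n : ℕ} (hD : D ⊆ n.divisors) :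
    ∑ d ∈ D, φ d ≤ n :=
  (sum_le_sum_of_subset hD).trans_eq (Nat.sum_totient n)

lemma le_of_mem_subsetSums {n k : ℕ} (h : k ∈ SubsetSums n) : k ≤ n := by
  obtain ⟨D, hD, rfl⟩ := h
  exact sum_totient_le_of_subset_divisors hD

lemma sub_one_le_totient_of_mem_primeFactors {d q : ℕ} (hq : q ∈ d.primeFactors) :
    q - 1 ≤ φ d := by
  rw [← Nat.totient_prime (Nat.prime_of_mem_primeFactors hq)]
  exact Nat.le_of_dvd (Nat.totient_pos.mpr (Nat.pos_of_ne_zero (Nat.mem_primeFactors.mp hq).2.2))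
    (Nat.totient_dvd_of_dvd (Nat.dvd_of_mem_primeFactors hq))

lemma le_two_add_prod_of_succ_mem_subsetSums {n p : ℕ} (hsf : Squarefree n)
    (h : ∏ q ∈ n.primeFactors.filter (· < p), q + 1 ∈ SubsetSums n) :
    p ≤ 2 + ∏ q ∈ n.primeFactors.filter (· < p), q := by
  set P := ∏ q ∈ n.primeFactors.filter (· < p), q
  obtain ⟨D, hD, hsum⟩ := h
  by_cases hbig : ∃ d ∈ D, ∃ q ∈ d.primeFactors, p ≤ q
  · obtain ⟨d, hd, q, hq, hpq⟩ := hbig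
    have hq_le := sub_one_le_totient_of_mem_primeFactors hq
    have hd_le : φ d ≤ P + 1 := hsum ▸ single_le_sum (fun _ _ => Nat.zero_le _) hd
    omega
  · push Not at hbig
    have hDP : D ⊆ P.divisors := by
      intro d hd
      have hdn : d ∣ n := Nat.dvd_of_mem_divisors (hD hd)
      refine Nat.mem_divisors.mpr ⟨?_, ?_⟩
      · rw [← Nat.prod_primeFactors_of_squarefree (hsf.squarefree_of_dvd hdn)]
        exact prod_dvd_prod_of_subset _ _ _ fun q hq =>
          mem_filter.mpr ⟨Nat.primeFactors_mono hdn hsf.ne_zero hq, hbig d hd q hq⟩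
      · exact (prod_pos fun q hq => (Nat.prime_of_mem_primeFactors (mem_filter.mp hq).1).pos).ne'
    have := sum_totient_le_of_subset_divisors hDP
    omega

lemma add_totient_mul_mem_subsetSums_mul {a m s t : ℕ} (ha : 1 < a) (hcop : a.Coprime m)
    (hs : s ∈ SubsetSums m) (ht : t ∈ SubsetSums m) : s + φ a * t ∈ SubsetSums (a * m) := by
  obtain ⟨S, hS, rfl⟩ := hs
  obtain ⟨T, hT, rfl⟩ := ht
  have ham : a * m ≠ 0 := by
    rintro h
    rcases Nat.mul_eq_zero.mp h with rfl | rfl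
    · omega
    · exact ha.ne' ((Nat.coprime_zero_right a).mp hcop)
  have hTm : ∀ d ∈ T, d ∣ m := fun d hd => Nat.dvd_of_mem_divisors (hT hd)
  have himage : T.image (a * ·) ⊆ (a * m).divisors := by
    intro x hx
    obtain ⟨d, hd, rfl⟩ := mem_image.mp hx
    exact Nat.mem_divisors.mpr ⟨mul_dvd_mul_left a (hTm d hd), ham⟩
  have hdisj : Disjoint S (T.image (a * ·)) := by
    refine disjoint_left.mpr fun x hxS hxT => ?_
    obtain ⟨d, -, rfl⟩ := mem_image.mp hxT
    exact ha.ne' (hcop.eq_one_of_dvd ((dvd_mul_right a d).trans (Nat.dvd_of_mem_divisors (hS hxS))))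
  refine ⟨S ∪ T.image (a * ·),
    union_subset (hS.trans (Nat.divisors_subset_of_dvd ham (dvd_mul_left m a))) himage, ?_⟩
  rw [sum_union hdisj, sum_image fun x _ y _ h => Nat.eq_of_mul_eq_mul_left (by omega) h, mul_sum]
  exact congrArg _ <| sum_congr rfl fun d hd =>
    (Nat.totient_mul (hcop.coprime_dvd_right (hTm d hd))).symm

lemma exists_add_mul_eq_of_le_mul_succ {c m k : ℕ} (hc : c ≤ m + 1) (hk : k ≤ m * (c + 1)) :
    ∃ s ≤ m, ∃ t ≤ m, s + c * t = k := by
  rcases Nat.eq_zero_or_pos c with rfl | hc0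
  · exact ⟨k, by simpa using hk, 0, Nat.zero_le m, by simp⟩
  rcases le_or_gt (k / c) m with h | h
  · exact ⟨k % c, by have := Nat.mod_lt k hc0; omega, k / c, h, Nat.mod_add_div k c⟩
  · have hck : (m + 1) * c ≤ k := (Nat.le_div_iff_mul_le hc0).mp h
    have hcm : c * m ≤ k := by nlinarith
    have hkm : k ≤ c * m + m := by linarith [mul_comm m c]
    exact ⟨k - c * m, by omega, m, le_rfl, by omega⟩

lemma Iic_subset_subsetSums_prod (s : Finset ℕ) (hs : ∀ p ∈ s, p.Prime)
    (hc : ∀ p ∈ s, p ≤ 2 + ∏ q ∈ s.filter (· < p), q) :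
    Set.Iic (∏ p ∈ s, p) ⊆ SubsetSums (∏ p ∈ s, p) := by
  induction s using Finset.induction_on_max with
  | empty =>
    intro k hk
    rw [prod_empty, Set.mem_Iic] at hk
    interval_cases k
    · exact ⟨∅, by simp, by simp⟩
    · exact ⟨{1}, by simp, by simp⟩
  | insert a s hlt ih =>
    have has : a ∉ s := fun h => lt_irrefl a (hlt a h)
    have ha := hs a (mem_insert_self a s)
    have hsm := ih (fun p hp => hs p (mem_insert_of_mem hp)) fun q hq => by
      simpa [filter_insert, not_lt.mpr (hlt q hq).le] using hc q (mem_insert_of_mem hq)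
    have hbound : a ≤ 2 + ∏ p ∈ s, p := by
      simpa [filter_insert, filter_true_of_mem hlt] using hc a (mem_insert_self a s)
    have hcop : a.Coprime (∏ p ∈ s, p) := Nat.Coprime.prod_right fun q hq =>
      (Nat.coprime_primes ha (hs q (mem_insert_of_mem hq))).mpr (hlt q hq).ne'
    intro k hk
    rw [Set.mem_Iic, prod_insert has] at hk
    obtain ⟨u, hu, t, ht, rfl⟩ := exists_add_mul_eq_of_le_mul_succ (c := a - 1)
      (m := ∏ p ∈ s, p) (k := k) (by omega) (by rwa [Nat.sub_add_cancel ha.one_lt.le, mul_comm])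
    rw [prod_insert has, ← Nat.totient_prime ha]
    exact add_totient_mul_mem_subsetSums_mul ha.one_lt hcop (hsm hu) (hsm ht)

theorem squarefree_phiPractical_iff (n : ℕ) (hn : 0 < n) (hsf : Squarefree n) :
    PhiPractical n ↔
      ∀ p ∈ n.primeFactors,
        p ≤ 2 + ∏ q ∈ n.primeFactors.filter (fun q => q < p), q := by
  constructor
  · rintro ⟨-, hsums⟩ p hp
    by_contra! hlt
    refine hlt.not_ge (le_two_add_prod_of_succ_mem_subsetSums hsf ?_)
    rw [hsums, Set.mem_Iic]
    have := Nat.le_of_mem_primeFactors hp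
    omega
  · intro hc
    refine ⟨hn, Set.Subset.antisymm (fun k => le_of_mem_subsetSums) ?_⟩
    have := Iic_subset_subsetSums_prod n.primeFactors (fun p => Nat.prime_of_mem_primeFactors) hc
    rwa [Nat.prod_primeFactors_of_squarefree hsf] at this
end

section
/- Let a be a positive integer and b a positive integer coprime to a. Then H(ab) > H(a) if and only if b/φ(b) ≥ 1 + 1/a, where H(k) = (k+1)/φ(k). -/
/-- `H(k) = (k+1)/φ(k)` as a rational number. -/
def Hfun (k : ℕ) : ℚ := ((k : ℚ) + 1) / Nat.totient k

theorem Hfun_lt_Hfun_mul_iff {a b : ℕ} (ha : 0 < a) (hb : 0 < b) (hco : Nat.Coprime a b) :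
    Hfun a < Hfun (a * b) ↔ (a + 1) * Nat.totient b < a * b + 1 := by
  have hφa : (0 : ℚ) < Nat.totient a := by exact_mod_cast Nat.totient_pos.2 ha
  have hφb : (0 : ℚ) < Nat.totient b := by exact_mod_cast Nat.totient_pos.2 hb
  rw [Hfun, Hfun, Nat.totient_mul hco, Nat.cast_mul (Nat.totient a), ← div_div,
    div_right_comm _ (Nat.totient a : ℚ), div_lt_div_iff_of_pos_right hφa, lt_div_iff₀ hφb]
  exact_mod_cast Iff.rfl

theorem one_add_one_div_le_div_totient_iff {a b : ℕ} (ha : 0 < a) (hb : 0 < b) :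
    1 + 1 / (a : ℚ) ≤ (b : ℚ) / Nat.totient b ↔ (a + 1) * Nat.totient b ≤ a * b := by
  have ha' : (0 : ℚ) < a := by exact_mod_cast ha
  have hφb : (0 : ℚ) < Nat.totient b := by exact_mod_cast Nat.totient_pos.2 hb
  rw [one_add_div ha'.ne', div_le_div_iff₀ ha' hφb, mul_comm (b : ℚ)]
  exact_mod_cast Iff.rfl

theorem H_mul_gt_iff (a b : ℕ) (ha : 0 < a) (hb : 0 < b) (hco : Nat.Coprime a b) :
    Hfun a < Hfun (a * b) ↔ 1 + 1 / (a : ℚ) ≤ (b : ℚ) / Nat.totient b := by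
  rw [Hfun_lt_Hfun_mul_iff ha hb hco, one_add_one_div_le_div_totient_iff ha hb]
  exact Nat.lt_succ_iff
end

section
/- If v is a squarefree positive integer all of whose prime factors exceed y ≥ 2 and v ≤ x, then v/φ(v) ≤ (1 + 1/(y−1))^{log x / log y}, and in particular v/φ(v) ≤ 1 + 2(log x)/y for y ≥ 2 log x ≥ 4. -/
/-!
Writing `v / φ(v) = ∏_{p ∣ v} (1 + 1/(p - 1))`, each factor is at most `1 + 1/(y - 1)`, and there
are at most `log x / log y` factors because `y ^ ω(v) ≤ ∏_{p ∣ v} p ≤ v ≤ x`. For the second bound,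
`(1 + 1/(y - 1)) ^ t ≤ exp (t / (y - 1))`, and for `y ≥ 4` one has `(y - 1) log y ≥ y`, so the
exponent is at most `u = log x / y ≤ 1/2`, where `exp u ≤ 1/(1 - u) ≤ 1 + 2u`.
-/

open Real Finset

namespace Nat

theorem cast_div_totient_eq_prod {n : ℕ} (hn : n ≠ 0) :
    (n : ℝ) / φ n = ∏ p ∈ n.primeFactors, (1 + 1 / ((p : ℝ) - 1)) := by
  have hone : ∀ p ∈ n.primeFactors, (1 : ℝ) < p := fun p hp ↦ by
    exact_mod_cast (prime_of_mem_primeFactors hp).one_lt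
  have hfactor : ∀ p ∈ n.primeFactors, 1 + 1 / ((p : ℝ) - 1) = p / (p - 1) := fun p hp ↦ by
    have : (p : ℝ) - 1 ≠ 0 := sub_ne_zero.mpr (hone p hp).ne'
    field_simp
    ring
  have hmul : (φ n : ℝ) * ∏ p ∈ n.primeFactors, (p : ℝ) =
      n * ∏ p ∈ n.primeFactors, ((p : ℝ) - 1) := by
    have := congrArg ((↑) : ℕ → ℝ) (totient_mul_prod_primeFactors n)
    push_cast [prod_congr rfl fun p hp ↦ cast_sub (prime_of_mem_primeFactors hp).one_le] at this
    exact this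
  have hφ : (φ n : ℝ) ≠ 0 := by exact_mod_cast (totient_pos.mpr (pos_of_ne_zero hn)).ne'
  have hprod : ∏ p ∈ n.primeFactors, ((p : ℝ) - 1) ≠ 0 :=
    prod_ne_zero_iff.mpr fun p hp ↦ sub_ne_zero.mpr (hone p hp).ne'
  rw [prod_congr rfl hfactor, prod_div_distrib, div_eq_div_iff hφ hprod, ← hmul, mul_comm]

theorem cast_div_totient_le_pow_card {n : ℕ} {y : ℝ} (hn : n ≠ 0) (hy : 1 < y)
    (hbig : ∀ p ∈ n.primeFactors, y < p) :
    (n : ℝ) / φ n ≤ (1 + 1 / (y - 1)) ^ n.primeFactors.card := by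
  rw [cast_div_totient_eq_prod hn, ← prod_const]
  refine prod_le_prod (fun p hp ↦ ?_) fun p hp ↦ ?_
  · have : (0 : ℝ) < p - 1 := by linarith [hbig p hp]
    positivity
  · gcongr
    exact (hbig p hp).le

theorem pow_card_primeFactors_le {n : ℕ} {y : ℝ} (hn : n ≠ 0) (hy : 0 ≤ y)
    (hbig : ∀ p ∈ n.primeFactors, y < p) : y ^ n.primeFactors.card ≤ n :=
  calc y ^ n.primeFactors.card = ∏ _p ∈ n.primeFactors, y := (prod_const y).symm
    _ ≤ ∏ p ∈ n.primeFactors, (p : ℝ) := prod_le_prod (fun _ _ ↦ hy) fun p hp ↦ (hbig p hp).le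
    _ ≤ n := by
      rw [← cast_prod]
      exact_mod_cast Nat.le_of_dvd (pos_of_ne_zero hn) (prod_primeFactors_dvd n)

theorem card_primeFactors_le_log_div_log {n : ℕ} {x y : ℝ} (hn : n ≠ 0) (hy : 1 < y)
    (hbig : ∀ p ∈ n.primeFactors, y < p) (hnx : (n : ℝ) ≤ x) :
    (n.primeFactors.card : ℝ) ≤ Real.log x / Real.log y := by
  rw [le_div_iff₀ (Real.log_pos hy), ← Real.log_pow]
  exact Real.log_le_log (by positivity) ((pow_card_primeFactors_le hn (by linarith) hbig).trans hnx)

end Nat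

namespace Real

theorem one_add_rpow_le_exp_mul {a t : ℝ} (ha : 0 ≤ a) (ht : 0 ≤ t) :
    (1 + a) ^ t ≤ exp (a * t) := by
  rw [exp_mul]
  gcongr
  linarith [add_one_le_exp a]

theorem exp_le_one_add_two_mul {u : ℝ} (hu₀ : 0 ≤ u) (hu : u ≤ 1 / 2) : exp u ≤ 1 + 2 * u := by
  have hu₁ : 0 < 1 - u := by linarith
  calc exp u ≤ 1 / (1 - u) := exp_bound_div_one_sub_of_interval hu₀ (by linarith)
    _ ≤ 1 + 2 * u := by rw [div_le_iff₀ hu₁]; nlinarith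

theorem le_sub_one_mul_log {y : ℝ} (hy : 4 ≤ y) : y ≤ (y - 1) * log y := by
  have hlog4 : 4 / 3 ≤ log y :=
    calc 4 / 3 ≤ 2 * log 2 := by linarith [log_two_gt_d9]
      _ = log 4 := by rw [← log_rpow two_pos]; norm_num
      _ ≤ log y := log_le_log (by norm_num) hy
  nlinarith

theorem one_add_one_div_sub_one_rpow_le {y L : ℝ} (hy : 4 ≤ y) (hL : 0 ≤ L) (hLy : 2 * L ≤ y) :
    (1 + 1 / (y - 1)) ^ (L / log y) ≤ 1 + 2 * L / y := by
  have hlog : 0 < log y := log_pos (by linarith)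
  have hexponent : 1 / (y - 1) * (L / log y) ≤ L / y := by
    rw [div_mul_div_comm, one_mul]
    exact div_le_div_of_nonneg_left hL (by linarith) (le_sub_one_mul_log hy)
  calc (1 + 1 / (y - 1)) ^ (L / log y) ≤ exp (1 / (y - 1) * (L / log y)) :=
        one_add_rpow_le_exp_mul (one_div_nonneg.mpr (by linarith)) (by positivity)
    _ ≤ exp (L / y) := exp_le_exp.mpr hexponent
    _ ≤ 1 + 2 * (L / y) :=
        exp_le_one_add_two_mul (by positivity) (by rw [div_le_iff₀ (by linarith)]; linarith)
    _ = 1 + 2 * L / y := by ring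

end Real

theorem totient_ratio_bound_general (v : ℕ) (x y : ℝ) (hv : 0 < v)
    (hbig : ∀ p ∈ v.primeFactors, y < p) (hvx : (v : ℝ) ≤ x) (hy : 2 ≤ y) :
    (v : ℝ) / Nat.totient v ≤ (1 + 1 / (y - 1)) ^ (Real.log x / Real.log y) ∧
      (2 * Real.log x ≤ y → 4 ≤ 2 * Real.log x →
        (v : ℝ) / Nat.totient v ≤ 1 + 2 * Real.log x / y) := by
  have hy₁ : 1 < y := by linarith
  have hratio : (v : ℝ) / Nat.totient v ≤ (1 + 1 / (y - 1)) ^ (Real.log x / Real.log y) := by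
    have hbase : 1 ≤ 1 + 1 / (y - 1) := le_add_of_nonneg_right (one_div_nonneg.mpr (by linarith))
    calc (v : ℝ) / Nat.totient v ≤ (1 + 1 / (y - 1)) ^ v.primeFactors.card :=
          Nat.cast_div_totient_le_pow_card hv.ne' hy₁ hbig
      _ = (1 + 1 / (y - 1)) ^ (v.primeFactors.card : ℝ) := (rpow_natCast _ _).symm
      _ ≤ (1 + 1 / (y - 1)) ^ (Real.log x / Real.log y) :=
          rpow_le_rpow_of_exponent_le hbase
            (Nat.card_primeFactors_le_log_div_log hv.ne' hy₁ hbig hvx)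
  exact ⟨hratio, fun hlogx hlogx₂ ↦ hratio.trans
    (one_add_one_div_sub_one_rpow_le (by linarith) (by linarith) hlogx)⟩

theorem totient_ratio_bound (v : ℕ) (x y : ℝ) (hv : 0 < v) (hsf : Squarefree v)
    (hbig : ∀ p ∈ v.primeFactors, y < p) (hvx : (v : ℝ) ≤ x) (hy : 2 ≤ y) :
    (v : ℝ) / Nat.totient v ≤ (1 + 1 / (y - 1)) ^ (Real.log x / Real.log y) ∧
      (2 * Real.log x ≤ y → 4 ≤ 2 * Real.log x →
        (v : ℝ) / Nat.totient v ≤ 1 + 2 * Real.log x / y) :=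
  totient_ratio_bound_general v x y hv hbig hvx hy
end

section
/- Every φ-practical number is weakly φ-practical: if n is φ-practical, then n belongs to the set W defined recursively by 1 ∈ W and (m ∈ W, prime p ≤ m + 2 ⟹ pm ∈ W). -/
open Pointwise

/-- The weakly `φ`-practical numbers: the smallest set containing `1` and closed
under multiplication by a prime `p ≤ m + 2`. -/
inductive WeaklyPhiPractical : ℕ → Prop
  | one : WeaklyPhiPractical 1
  | mul_prime (m p : ℕ) (hm : WeaklyPhiPractical m) (hp : p.Prime) (hle : p ≤ m + 2) :
      WeaklyPhiPractical (p * m)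

/-- The largest divisor of `n` supported on primes `< q`. -/
def Mq (n q : ℕ) : ℕ := ∏ r ∈ n.primeFactors.filter (· < q), r ^ n.factorization r

lemma mq_pos (n q : ℕ) : 0 < Mq n q := by
  apply Finset.prod_pos
  intro r hr
  exact pow_pos (Nat.prime_of_mem_primeFactors (Finset.mem_filter.1 hr).1).pos _

lemma mq_dvd (n q : ℕ) (hn : n ≠ 0) : Mq n q ∣ n := by
  conv_rhs => rw [← Nat.factorization_prod_pow_eq_self hn]
  rw [Finsupp.prod, Nat.support_factorization]
  exact Finset.prod_dvd_prod_of_subset _ _ _ (Finset.filter_subset _ _)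

lemma mq_factorization_apply (n q t : ℕ) :
    (Mq n q).factorization t =
      if t ∈ n.primeFactors.filter (· < q) then n.factorization t else 0 := by
  rw [Mq, Nat.factorization_prod (fun r hr =>
    (pow_pos (Nat.prime_of_mem_primeFactors (Finset.mem_filter.1 hr).1).pos _).ne'),
    Finset.sum_apply']
  split_ifs with ht
  · rw [Finset.sum_eq_single t]
    · rw [Nat.Prime.factorization_pow (Nat.prime_of_mem_primeFactors (Finset.mem_filter.1 ht).1),
        Finsupp.single_eq_same]
    · intro r hr hrt
      rw [Nat.Prime.factorization_pow (Nat.prime_of_mem_primeFactors (Finset.mem_filter.1 hr).1),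
        Finsupp.single_eq_of_ne' hrt]
    · intro h; exact absurd ht h
  · apply Finset.sum_eq_zero
    intro r hr
    rw [Nat.Prime.factorization_pow (Nat.prime_of_mem_primeFactors (Finset.mem_filter.1 hr).1),
      Finsupp.single_eq_of_ne']
    intro h; exact ht (h ▸ hr)

lemma not_dvd_mq (n q : ℕ) (hq : q.Prime) : ¬ q ∣ Mq n q := by
  intro h
  have h1 := Nat.Prime.factorization_pos_of_dvd hq (mq_pos n q).ne' h
  rw [mq_factorization_apply] at h1
  simp only [Finset.mem_filter, lt_self_iff_false, and_false, if_false] at h1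

lemma dvd_mq (n q d : ℕ) (hn : n ≠ 0) (hd : d ∣ n)
    (h : ∀ r, r.Prime → r ∣ d → r < q) : d ∣ Mq n q := by
  have hd0 : d ≠ 0 := fun h0 => hn (zero_dvd_iff.1 (h0 ▸ hd))
  rw [← Nat.factorization_le_iff_dvd hd0 (mq_pos n q).ne']
  intro t
  rw [mq_factorization_apply n q t]
  by_cases htd : t ∈ d.primeFactors
  · have htp := Nat.prime_of_mem_primeFactors htd
    have htdvd := Nat.dvd_of_mem_primeFactors htd
    have htn : t ∈ n.primeFactors :=
      Nat.mem_primeFactors.2 ⟨htp, htdvd.trans hd, hn⟩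
    have htmem : t ∈ n.primeFactors.filter (· < q) :=
      Finset.mem_filter.2 ⟨htn, h t htp htdvd⟩
    rw [if_pos htmem]
    exact (Nat.factorization_le_iff_dvd hd0 hn).2 hd t
  · have : d.factorization t = 0 := by
      by_contra h0
      exact htd (by rw [← Nat.support_factorization]; exact Finsupp.mem_support_iff.2 h0)
    simp [this]

/-- From φ-practicality: each prime factor q of n satisfies q ≤ Mq n q + 2. -/
lemma cond_of_phiPractical (n q : ℕ) (hn : PhiPractical n) (hq : q.Prime) (hqn : q ∣ n) :
    q ≤ Mq n q + 2 := by
  have n0 : n ≠ 0 := hn.1.ne'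
  set M := Mq n q with hM
  have hMdvd : M ∣ n := mq_dvd n q n0
  have hMlt : M < n := by
    have hne : M ≠ n := by
      intro he
      apply not_dvd_mq n q hq
      rw [← hM, he]
      exact hqn
    exact lt_of_le_of_ne (Nat.le_of_dvd hn.1 hMdvd) hne
  have hmem : (M + 1) ∈ SubsetSums n := by
    rw [hn.2]; exact hMlt
  obtain ⟨D, hD, hsum⟩ := hmem
  by_cases hex : ∃ d ∈ D, ∃ r, r.Prime ∧ q ≤ r ∧ r ∣ d
  · obtain ⟨d, hdD, r, hr, hqr, hrd⟩ := hex
    have hd0 : 0 < d := Nat.pos_of_mem_divisors (hD hdD)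
    have h1 : r.totient ∣ d.totient := Nat.totient_dvd_of_dvd hrd
    have h2 : d.totient ≠ 0 := (Nat.totient_pos.2 hd0).ne'
    have h3 : r - 1 ≤ d.totient := by
      rw [← Nat.totient_prime hr]
      exact Nat.le_of_dvd (Nat.pos_of_ne_zero h2) h1
    have h4 : d.totient ≤ M + 1 := by
      rw [hsum]
      exact Finset.single_le_sum (fun i _ => Nat.zero_le _) hdD
    have := hq.two_le
    omega
  · push_neg at hex
    have hsub : D ⊆ M.divisors := by
      intro d hdD
      have hd : d ∣ n := Nat.dvd_of_mem_divisors (hD hdD)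
      refine Nat.mem_divisors.2 ⟨dvd_mq n q d n0 hd ?_, (mq_pos n q).ne'⟩
      intro r hr hrd
      by_contra hlt
      exact (hex d hdD r hr (le_of_not_gt hlt)) hrd
    have : M + 1 ≤ M := by
      calc M + 1 = ∑ d ∈ D, Nat.totient d := hsum
        _ ≤ ∑ d ∈ M.divisors, Nat.totient d :=
            Finset.sum_le_sum_of_subset hsub
        _ = M := Nat.sum_totient M
    omega

lemma mq_div_eq (n p q : ℕ) (hn : n ≠ 0) (hp : p.Prime) (hpn : p ∣ n) (hq : q ≤ p) :
    Mq (n / p) q = Mq n q := by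
  have hdiv0 : n / p ≠ 0 := by
    have := Nat.div_pos (Nat.le_of_dvd (Nat.pos_of_ne_zero hn) hpn) hp.pos
    omega
  have hsets : (n / p).primeFactors.filter (· < q) = n.primeFactors.filter (· < q) := by
    ext r
    simp only [Finset.mem_filter, Nat.mem_primeFactors]
    constructor
    · rintro ⟨⟨hr, hrd, -⟩, hrq⟩
      exact ⟨⟨hr, hrd.trans (Nat.div_dvd_of_dvd hpn), hn⟩, hrq⟩
    · rintro ⟨⟨hr, hrd, -⟩, hrq⟩
      have hrp : r ≠ p := by omega
      have : r ∣ n / p := by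
        rw [Nat.dvd_div_iff_mul_dvd hpn]
        exact (Nat.Coprime.mul_dvd_of_dvd_of_dvd
          ((Nat.coprime_primes hp hr).2 (Ne.symm hrp)) hpn hrd)
      exact ⟨⟨hr, this, hdiv0⟩, hrq⟩
  rw [Mq, Mq, hsets]
  apply Finset.prod_congr rfl
  intro r hr
  obtain ⟨hrn, hrq⟩ := Finset.mem_filter.1 hr
  have hrp : r ≠ p := by omega
  rw [Nat.factorization_div hpn, Finsupp.tsub_apply, hp.factorization,
    Finsupp.single_eq_of_ne' (Ne.symm hrp), Nat.sub_zero]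

lemma weakly_of_cond : ∀ n : ℕ, 0 < n →
    (∀ q, q.Prime → q ∣ n → q ≤ Mq n q + 2) → WeaklyPhiPractical n := by
  intro n
  induction n using Nat.strong_induction_on with
  | _ n ih =>
    intro hn hcond
    rcases eq_or_lt_of_le (Nat.succ_le_of_lt hn) with h1 | h1
    · rw [← h1]; exact WeaklyPhiPractical.one
    · have hne : n.primeFactors.Nonempty := Nat.nonempty_primeFactors.2 h1
      set p := n.primeFactors.max' hne with hp
      have hpmem := n.primeFactors.max'_mem hne
      have hpp : p.Prime := Nat.prime_of_mem_primeFactors hpmem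
      have hpn : p ∣ n := Nat.dvd_of_mem_primeFactors hpmem
      have hdivpos : 0 < n / p := Nat.div_pos (Nat.le_of_dvd hn hpn) hpp.pos
      have hmax : ∀ q ∈ n.primeFactors, q ≤ p := fun q hq => n.primeFactors.le_max' q hq
      have hWdiv : WeaklyPhiPractical (n / p) := by
        apply ih (n / p) (Nat.div_lt_self hn hpp.one_lt) hdivpos
        intro q hq hqdvd
        have hqn : q ∣ n := hqdvd.trans (Nat.div_dvd_of_dvd hpn)
        have hqp : q ≤ p := hmax q (Nat.mem_primeFactors.2 ⟨hq, hqn, hn.ne'⟩)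
        rw [mq_div_eq n p q hn.ne' hpp hpn hqp]
        exact hcond q hq hqn
      have hple : p ≤ n / p + 2 := by
        have h2 := hcond p hpp hpn
        have hMdvd : Mq n p ∣ n / p := by
          rw [Nat.dvd_div_iff_mul_dvd hpn]
          rw [mul_comm]
          exact Nat.Coprime.mul_dvd_of_dvd_of_dvd
            ((Nat.Prime.coprime_iff_not_dvd hpp).2 (not_dvd_mq n p hpp)).symm
            (mq_dvd n p hn.ne') hpn
        have := Nat.le_of_dvd hdivpos hMdvd
        omega
      have : n = p * (n / p) := (Nat.mul_div_cancel' hpn).symm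
      rw [this]
      exact WeaklyPhiPractical.mul_prime _ _ hWdiv hpp hple

theorem phiPractical_weaklyPhiPractical (n : ℕ) (hn : PhiPractical n) :
    WeaklyPhiPractical n := by
  exact weakly_of_cond n hn.1 (fun q hq hqn => cond_of_phiPractical n q hn hq hqn)
end
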